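/- arXiv:1808.03095 — 2 statements merged into one kernel-verified Lean document; each statement's English description precedes it below -/
import Mathlib

section
/- Let ρ > 0, 0 < a < b < ∞, 0 ≤ γ < 1 and α > γ. Let g : ℝ → ℝ be a function on (a, b] such that t ↦ ((t^ρ − a^ρ)/ρ)^{γ} g(t) extends continuously to [a, b]. Then lim_{t→a+} (^ρI_{a+}^{α} g)(t) = 0. -/
open MeasureTheory Real Set Filter

/-- Left-sided Katugampola fractional integral of order `α`:
`(^ρI_{a+}^{α} h)(t) = (1/Γ(α)) ∫_a^t s^(ρ-1) ((t^ρ - s^ρ)/ρ)^(α-1) h(s) ds`. -/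
noncomputable def katI (ρ α a : ℝ) (h : ℝ → ℝ) (t : ℝ) : ℝ :=
  (1 / Real.Gamma α) * ∫ s in a..t, s ^ (ρ - 1) * ((t ^ ρ - s ^ ρ) / ρ) ^ (α - 1) * h s

/-- Right-sided Katugampola fractional integral of order `α`:
`(^ρI_{b-}^{α} h)(t) = (1/Γ(α)) ∫_t^b s^(ρ-1) ((s^ρ - t^ρ)/ρ)^(α-1) h(s) ds`. -/
noncomputable def katIr (ρ α b : ℝ) (h : ℝ → ℝ) (t : ℝ) : ℝ :=
  (1 / Real.Gamma α) * ∫ s in t..b, s ^ (ρ - 1) * ((s ^ ρ - t ^ ρ) / ρ) ^ (α - 1) * h s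

/-- Left-sided Katugampola fractional derivative of order `0 < α < 1`:
`(^ρD_{a+}^{α} h)(t) = t^(ρ-1) ⬝ d/dt (^ρI_{a+}^{1-α} h)(t)`. -/
noncomputable def katD (ρ α a : ℝ) (h : ℝ → ℝ) (t : ℝ) : ℝ :=
  t ^ (ρ - 1) * deriv (katI ρ (1 - α) a h) t

/-- Right-sided Katugampola fractional derivative of order `0 < α < 1`:
`(^ρD_{b-}^{α} h)(t) = -t^(ρ-1) ⬝ d/dt (^ρI_{b-}^{1-α} h)(t)`. -/
noncomputable def katDr (ρ α b : ℝ) (h : ℝ → ℝ) (t : ℝ) : ℝ :=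
  -(t ^ (ρ - 1) * deriv (katIr ρ (1 - α) b h) t)

/-- Generalized Katugampola fractional derivative of order `0 < α < 1` and type `0 ≤ β ≤ 1`:
`(^ρD_{a+}^{α,β} h)(t) = (^ρI_{a+}^{β(1-α)} (δ_ρ (^ρI_{a+}^{(1-β)(1-α)} h)))(t)`,
where `(δ_ρ f)(t) = t^(ρ-1) f'(t)`. -/
noncomputable def katDgen (ρ α β a : ℝ) (h : ℝ → ℝ) (t : ℝ) : ℝ :=
  katI ρ (β * (1 - α)) a
    (fun s => s ^ (ρ - 1) * deriv (katI ρ ((1 - β) * (1 - α)) a h) s) t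

/-! On `(a, b]` the weight gives `|g s| ≤ M ((s^ρ - a^ρ)/ρ)^(-γ)`, so the fractional integral is
dominated by the kernel `s^(ρ-1) ((s^ρ - a^ρ)/ρ)^(-γ) ((t^ρ - s^ρ)/ρ)^(α-1)`. The substitution
`x = (s^ρ - a^ρ)/ρ` followed by `x = T y` turns its integral into the Beta integral
`B(1 - γ, α) T^(α-γ)` with `T = (t^ρ - a^ρ)/ρ`, which tends to `0` as `t → a+` because `α > γ`. -/

lemma intervalIntegrable_rpow_mul_one_sub_rpow {p q : ℝ} (hp : 0 < p) (hq : 0 < q) :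
    IntervalIntegrable (fun y : ℝ => y ^ (p - 1) * (1 - y) ^ (q - 1)) volume 0 1 := by
  refine (Complex.betaIntegral_convergent (u := p) (v := q) (by simpa) (by simpa)).norm.congr_uIoo
    fun y hy => ?_
  rw [uIoo_of_le zero_le_one] at hy
  have h1y : (1 : ℂ) - y = ((1 - y : ℝ) : ℂ) := by push_cast; ring
  simp only [norm_mul, h1y, Complex.norm_cpow_eq_rpow_re_of_pos hy.1,
    Complex.norm_cpow_eq_rpow_re_of_pos (sub_pos.2 hy.2)]
  simp

lemma mul_rpow_mul_sub_mul_rpow {p q T y : ℝ} (hT : 0 < T) (hy : y ∈ Icc (0 : ℝ) 1) :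
    (T * y) ^ (p - 1) * (T - T * y) ^ (q - 1) =
      T ^ (p - 1 + (q - 1)) * (y ^ (p - 1) * (1 - y) ^ (q - 1)) := by
  rw [← mul_one_sub, mul_rpow hT.le hy.1, mul_rpow hT.le (sub_nonneg.2 hy.2), rpow_add hT]
  ring

lemma intervalIntegrable_rpow_mul_sub_rpow {p q T : ℝ} (hp : 0 < p) (hq : 0 < q) (hT : 0 < T) :
    IntervalIntegrable (fun x : ℝ => x ^ (p - 1) * (T - x) ^ (q - 1)) volume 0 T := by
  have h := (intervalIntegrable_rpow_mul_one_sub_rpow hp hq).const_mul (T ^ (p - 1 + (q - 1)))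
  rw [← IntervalIntegrable.comp_mul_left_iff (c := T) hT.ne', zero_div, div_self hT.ne']
  refine h.congr_uIoo fun y hy => (mul_rpow_mul_sub_mul_rpow hT ?_).symm
  rw [uIoo_of_le zero_le_one] at hy
  exact Ioo_subset_Icc_self hy

lemma integral_rpow_mul_sub_rpow {p q T : ℝ} (hT : 0 < T) :
    ∫ x in (0 : ℝ)..T, x ^ (p - 1) * (T - x) ^ (q - 1) =
      T ^ (p + q - 1) * ∫ y in (0 : ℝ)..1, y ^ (p - 1) * (1 - y) ^ (q - 1) := by
  calc ∫ x in (0 : ℝ)..T, x ^ (p - 1) * (T - x) ^ (q - 1)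
      = T * ∫ y in (0 : ℝ)..1, (T * y) ^ (p - 1) * (T - T * y) ^ (q - 1) := by
        simpa using (intervalIntegral.smul_integral_comp_mul_left
          (fun x => x ^ (p - 1) * (T - x) ^ (q - 1)) T (a := 0) (b := 1)).symm
    _ = T * ∫ y in (0 : ℝ)..1, T ^ (p - 1 + (q - 1)) * (y ^ (p - 1) * (1 - y) ^ (q - 1)) := by
        congr 1
        refine intervalIntegral.integral_congr fun y hy => mul_rpow_mul_sub_mul_rpow hT ?_
        rwa [uIcc_of_le zero_le_one] at hy
    _ = T ^ (p + q - 1) * ∫ y in (0 : ℝ)..1, y ^ (p - 1) * (1 - y) ^ (q - 1) := by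
        rw [show p + q - 1 = 1 + (p - 1 + (q - 1)) by ring, rpow_add hT 1, rpow_one,
          intervalIntegral.integral_const_mul, mul_assoc]

lemma hasDerivAt_rpow_sub_const_div {ρ c s : ℝ} (hρ : ρ ≠ 0) (hs : 0 < s) :
    HasDerivAt (fun u : ℝ => (u ^ ρ - c) / ρ) (s ^ (ρ - 1)) s := by
  have h := ((hasDerivAt_rpow_const (p := ρ) (Or.inl hs.ne')).sub_const c).div_const ρ
  rwa [mul_div_cancel_left₀ _ hρ] at h

lemma continuousOn_rpow_sub_const_div {ρ c a t : ℝ} (hρ : ρ ≠ 0) (ha : 0 < a) :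
    ContinuousOn (fun s : ℝ => (s ^ ρ - c) / ρ) (Icc a t) := fun _ hs =>
  (hasDerivAt_rpow_sub_const_div hρ (ha.trans_le hs.1)).continuousAt.continuousWithinAt

lemma rpow_sub_rpow_div_nonneg {ρ a t : ℝ} (hρ : 0 < ρ) (ha : 0 ≤ a) (hat : a ≤ t) :
    0 ≤ (t ^ ρ - a ^ ρ) / ρ :=
  div_nonneg (sub_nonneg.2 (rpow_le_rpow ha hat hρ.le)) hρ.le

lemma rpow_sub_rpow_div_pos {ρ a t : ℝ} (hρ : 0 < ρ) (ha : 0 ≤ a) (hat : a < t) :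
    0 < (t ^ ρ - a ^ ρ) / ρ :=
  div_pos (sub_pos.2 (rpow_lt_rpow ha hat hρ)) hρ

lemma integral_katugampola_substitution {ρ a t : ℝ} (hρ : 0 < ρ) (ha : 0 < a) (hat : a ≤ t)
    (K : ℝ → ℝ) :
    ∫ s in a..t, s ^ (ρ - 1) * K ((s ^ ρ - a ^ ρ) / ρ) =
      ∫ x in (0 : ℝ)..(t ^ ρ - a ^ ρ) / ρ, K x := by
  have h := integral_Icc_deriv_smul_of_deriv_nonneg (g := K) (f' := fun s => s ^ (ρ - 1))
    (continuousOn_rpow_sub_const_div (c := a ^ ρ) hρ.ne' ha)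
    (fun s hs => hasDerivAt_rpow_sub_const_div hρ.ne' (ha.trans hs.1))
    (fun s hs => (rpow_pos_of_pos (ha.trans hs.1) _).le) hat
  rw [intervalIntegral.integral_of_le hat,
    intervalIntegral.integral_of_le (rpow_sub_rpow_div_nonneg hρ ha.le hat),
    ← integral_Icc_eq_integral_Ioc, ← integral_Icc_eq_integral_Ioc]
  simpa using h

lemma intervalIntegrable_katugampola_substitution_iff {ρ a t : ℝ} (hρ : 0 < ρ) (ha : 0 < a)
    (hat : a ≤ t) (K : ℝ → ℝ) :
    IntervalIntegrable (fun s => s ^ (ρ - 1) * K ((s ^ ρ - a ^ ρ) / ρ)) volume a t ↔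
      IntervalIntegrable K volume 0 ((t ^ ρ - a ^ ρ) / ρ) := by
  have h := integrableOn_Icc_deriv_smul_iff_of_deriv_nonneg (g := K)
    (f' := fun s => s ^ (ρ - 1)) (continuousOn_rpow_sub_const_div (c := a ^ ρ) hρ.ne' ha)
    (fun s hs => hasDerivAt_rpow_sub_const_div hρ.ne' (ha.trans hs.1))
    (fun s hs => (rpow_pos_of_pos (ha.trans hs.1) _).le) hat
  rw [intervalIntegrable_iff_integrableOn_Icc_of_le hat,
    intervalIntegrable_iff_integrableOn_Icc_of_le (rpow_sub_rpow_div_nonneg hρ ha.le hat)]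
  simpa using h

lemma intervalIntegrable_katugampola_kernel {ρ a t p q : ℝ} (hρ : 0 < ρ) (ha : 0 < a)
    (hat : a < t) (hp : 0 < p) (hq : 0 < q) :
    IntervalIntegrable (fun s => s ^ (ρ - 1) * ((s ^ ρ - a ^ ρ) / ρ) ^ (p - 1) *
      ((t ^ ρ - s ^ ρ) / ρ) ^ (q - 1)) volume a t := by
  have h := (intervalIntegrable_katugampola_substitution_iff hρ ha hat.le
    (fun x => x ^ (p - 1) * ((t ^ ρ - a ^ ρ) / ρ - x) ^ (q - 1))).2
    (intervalIntegrable_rpow_mul_sub_rpow hp hq (rpow_sub_rpow_div_pos hρ ha.le hat))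
  convert h using 2 with s
  rw [show (t ^ ρ - a ^ ρ) / ρ - (s ^ ρ - a ^ ρ) / ρ = (t ^ ρ - s ^ ρ) / ρ by ring, mul_assoc]

lemma integral_katugampola_kernel {ρ a t p q : ℝ} (hρ : 0 < ρ) (ha : 0 < a) (hat : a < t) :
    ∫ s in a..t, s ^ (ρ - 1) * ((s ^ ρ - a ^ ρ) / ρ) ^ (p - 1) * ((t ^ ρ - s ^ ρ) / ρ) ^ (q - 1) =
      ((t ^ ρ - a ^ ρ) / ρ) ^ (p + q - 1) *
        ∫ y in (0 : ℝ)..1, y ^ (p - 1) * (1 - y) ^ (q - 1) := by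
  rw [← integral_rpow_mul_sub_rpow (rpow_sub_rpow_div_pos hρ ha.le hat),
    ← integral_katugampola_substitution hρ ha hat.le]
  refine intervalIntegral.integral_congr fun s _ => ?_
  rw [show (t ^ ρ - a ^ ρ) / ρ - (s ^ ρ - a ^ ρ) / ρ = (t ^ ρ - s ^ ρ) / ρ by ring, mul_assoc]

lemma exists_abs_le_mul_rpow_neg {s u : Set ℝ} {G g w : ℝ → ℝ} {γ : ℝ} (hs : IsCompact s)
    (hG : ContinuousOn G s) (hus : u ⊆ s) (hw : ∀ x ∈ u, 0 < w x)
    (hGg : ∀ x ∈ u, G x = w x ^ γ * g x) :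
    ∃ M, ∀ x ∈ u, |g x| ≤ M * w x ^ (-γ) := by
  obtain ⟨M, hM⟩ := hs.exists_bound_of_continuousOn hG
  refine ⟨M, fun x hx => ?_⟩
  have hg : g x = w x ^ (-γ) * G x := by
    rw [hGg x hx, ← mul_assoc, ← rpow_add (hw x hx), neg_add_cancel, rpow_zero, one_mul]
  rw [hg, abs_mul, abs_of_pos (rpow_pos_of_pos (hw x hx) _), mul_comm M]
  exact mul_le_mul_of_nonneg_left (hM x (hus hx)) (rpow_pos_of_pos (hw x hx) _).le

lemma norm_katI_le {ρ α γ a t M : ℝ} (hρ : 0 < ρ) (ha : 0 < a) (hat : a < t) (hγ : γ < 1)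
    (hα : 0 < α) {g : ℝ → ℝ} (hg : ∀ s ∈ Ioc a t, |g s| ≤ M * ((s ^ ρ - a ^ ρ) / ρ) ^ (-γ)) :
    ‖katI ρ α a g t‖ ≤ |1 / Gamma α| * M *
      (∫ y in (0 : ℝ)..1, y ^ (-γ) * (1 - y) ^ (α - 1)) * ((t ^ ρ - a ^ ρ) / ρ) ^ (α - γ) := by
  have hkernel := intervalIntegrable_katugampola_kernel hρ ha hat (sub_pos.2 hγ) hα
  have hintegral := integral_katugampola_kernel (p := 1 - γ) (q := α) hρ ha hat
  simp only [sub_sub_cancel_left, show 1 - γ + α - 1 = α - γ by ring] at hkernel hintegral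
  have hpointwise : ∀ s ∈ Ioc a t, ‖s ^ (ρ - 1) * ((t ^ ρ - s ^ ρ) / ρ) ^ (α - 1) * g s‖ ≤
      M * (s ^ (ρ - 1) * ((s ^ ρ - a ^ ρ) / ρ) ^ (-γ) * ((t ^ ρ - s ^ ρ) / ρ) ^ (α - 1)) := by
    intro s hs
    have hweight : 0 ≤ s ^ (ρ - 1) * ((t ^ ρ - s ^ ρ) / ρ) ^ (α - 1) :=
      mul_nonneg (rpow_nonneg (ha.trans hs.1).le _)
        (rpow_nonneg (rpow_sub_rpow_div_nonneg hρ (ha.trans hs.1).le hs.2) _)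
    rw [norm_mul, Real.norm_of_nonneg hweight, Real.norm_eq_abs]
    calc s ^ (ρ - 1) * ((t ^ ρ - s ^ ρ) / ρ) ^ (α - 1) * |g s|
        ≤ s ^ (ρ - 1) * ((t ^ ρ - s ^ ρ) / ρ) ^ (α - 1) * (M * ((s ^ ρ - a ^ ρ) / ρ) ^ (-γ)) :=
          mul_le_mul_of_nonneg_left (hg s hs) hweight
      _ = _ := by ring
  rw [katI, norm_mul, Real.norm_eq_abs]
  calc |1 / Gamma α| * ‖∫ s in a..t, s ^ (ρ - 1) * ((t ^ ρ - s ^ ρ) / ρ) ^ (α - 1) * g s‖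
      ≤ |1 / Gamma α| * ∫ s in a..t,
          M * (s ^ (ρ - 1) * ((s ^ ρ - a ^ ρ) / ρ) ^ (-γ) * ((t ^ ρ - s ^ ρ) / ρ) ^ (α - 1)) := by
        gcongr
        exact intervalIntegral.norm_integral_le_of_norm_le hat.le (ae_of_all _ hpointwise)
          (hkernel.const_mul M)
    _ = _ := by rw [intervalIntegral.integral_const_mul, hintegral]; ring

lemma tendsto_rpow_sub_rpow_div_nhdsGT {ρ a e : ℝ} (ha : a ≠ 0) (he : 0 < e) :
    Tendsto (fun t => ((t ^ ρ - a ^ ρ) / ρ) ^ e) (nhdsWithin a (Ioi a)) (nhds 0) := by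
  have h : ContinuousAt (fun t => ((t ^ ρ - a ^ ρ) / ρ) ^ e) a :=
    (((continuousAt_rpow_const a ρ (Or.inl ha)).sub continuousAt_const).div_const ρ).rpow_const
      (Or.inr he.le)
  simpa [zero_rpow he.ne'] using h.tendsto.mono_left nhdsWithin_le_nhds

/-- If `g ∈ C_{γ,ρ}[a,b]` and `α > γ`, then `(^ρI_{a+}^α g)(a+) = 0`. -/
theorem katI_tendsto_zero
    (ρ α γ a b : ℝ) (hρ : 0 < ρ) (ha : 0 < a) (hab : a < b)
    (hγ0 : 0 ≤ γ) (hγ1 : γ < 1) (hαγ : γ < α)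
    (g : ℝ → ℝ)
    (hg : ∃ G : ℝ → ℝ, ContinuousOn G (Set.Icc a b) ∧
      ∀ t ∈ Set.Ioc a b, G t = ((t ^ ρ - a ^ ρ) / ρ) ^ γ * g t) :
    Filter.Tendsto (katI ρ α a g) (nhdsWithin a (Set.Ioi a)) (nhds 0) := by
  obtain ⟨G, hG, hGg⟩ := hg
  obtain ⟨M, hM⟩ := exists_abs_le_mul_rpow_neg isCompact_Icc hG Ioc_subset_Icc_self
    (fun s hs => rpow_sub_rpow_div_pos hρ ha.le hs.1) hGg
  have hα : 0 < α := hγ0.trans_lt hαγ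
  have hlim := (tendsto_rpow_sub_rpow_div_nhdsGT (ρ := ρ) ha.ne' (sub_pos.2 hαγ)).const_mul
    (|1 / Gamma α| * M * (∫ y in (0 : ℝ)..1, y ^ (-γ) * (1 - y) ^ (α - 1)))
  rw [mul_zero] at hlim
  refine squeeze_zero_norm' ?_ hlim
  filter_upwards [Ioc_mem_nhdsGT hab] with t ht
  exact norm_katI_le hρ ha ht.1 hγ1 hα fun s hs => hM s ⟨hs.1, hs.2.trans ht.2⟩
end

section
/- Let ρ > 0, 0 < a < b < ∞, 0 ≤ γ < 1 and α > 0. Then there exists a constant C ≥ 0 such that for every function g : ℝ → ℝ on (a, b] for which t ↦ ((t^ρ − a^ρ)/ρ)^{γ} g(t) extends continuously to [a, b], and for every t ∈ (a, b], one has ((t^ρ − a^ρ)/ρ)^{γ} |(^ρI_{a+}^{α} g)(t)| ≤ C · sup_{s ∈ (a,b]} ((s^ρ − a^ρ)/ρ)^{γ} |g(s)|; that is, the Katugampola fractional integral ^ρI_{a+}^{α} is a bounded operator on the weighted space C_{γ,ρ}[a,b]. -/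
open MeasureTheory Real Set Filter

/-! With `w s = (s ^ ρ - a ^ ρ) / ρ` and `M` the weighted supremum, `|g s| ≤ M * w s ^ (-γ)`, so
`|I g t|` is at most `M / Γ(α)` times `∫_a^t s^(ρ-1) (w t - w s)^(α-1) (w s)^(-γ) ds`. The
substitution `v = w s / w t` turns this integral into `w t ^ (α - γ) * Β(1 - γ, α)`; multiplying by
the weight `w t ^ γ` leaves `w t ^ α ≤ w b ^ α`, which is bounded uniformly in `t`. -/

theorem intervalIntegrable_one_sub_rpow_mul_rpow {α γ : ℝ} (hα : 0 < α) (hγ : γ < 1) :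
    IntervalIntegrable (fun v : ℝ => (1 - v) ^ (α - 1) * v ^ (-γ)) volume 0 1 := by
  have hβ := (Complex.betaIntegral_convergent (u := ((1 - γ : ℝ) : ℂ)) (v := (α : ℂ))
    (by simpa using hγ) (by simpa using hα)).norm
  refine hβ.congr fun v hv => ?_
  rw [uIoc_of_le zero_le_one] at hv
  have hv' : 0 ≤ 1 - v := sub_nonneg.2 hv.2
  have h1 : (1 : ℂ) - v = ((1 - v : ℝ) : ℂ) := by push_cast; ring
  have h2 : ((1 - γ : ℝ) : ℂ) - 1 = ((-γ : ℝ) : ℂ) := by push_cast; ring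
  have h3 : (α : ℂ) - 1 = ((α - 1 : ℝ) : ℂ) := by push_cast; ring
  rw [h1, h2, h3, ← Complex.ofReal_cpow hv.1.le, ← Complex.ofReal_cpow hv', ← Complex.ofReal_mul,
    Complex.norm_real, Real.norm_of_nonneg (mul_nonneg (rpow_nonneg hv.1.le _) (rpow_nonneg hv' _)),
    mul_comm]

noncomputable def katWeight (ρ a s : ℝ) : ℝ := (s ^ ρ - a ^ ρ) / ρ

noncomputable def katKernel (ρ α t s : ℝ) : ℝ := s ^ (ρ - 1) * ((t ^ ρ - s ^ ρ) / ρ) ^ (α - 1)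

section Katugampola

variable {ρ a s t : ℝ}

theorem katWeight_self : katWeight ρ a a = 0 := by
  simp [katWeight]

theorem katWeight_sub_katWeight : katWeight ρ a t - katWeight ρ a s = (t ^ ρ - s ^ ρ) / ρ := by
  unfold katWeight; ring

theorem katWeight_le_katWeight (hρ : 0 < ρ) (hs : 0 ≤ s) (hst : s ≤ t) :
    katWeight ρ a s ≤ katWeight ρ a t := by
  unfold katWeight; gcongr

theorem katWeight_lt_katWeight (hρ : 0 < ρ) (hs : 0 ≤ s) (hst : s < t) :
    katWeight ρ a s < katWeight ρ a t := by
  unfold katWeight; gcongr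

theorem katWeight_nonneg (hρ : 0 < ρ) (ha : 0 ≤ a) (has : a ≤ s) : 0 ≤ katWeight ρ a s :=
  katWeight_self (ρ := ρ) ▸ katWeight_le_katWeight hρ ha has

theorem katWeight_pos (hρ : 0 < ρ) (ha : 0 ≤ a) (has : a < s) : 0 < katWeight ρ a s :=
  katWeight_self (ρ := ρ) ▸ katWeight_lt_katWeight hρ ha has

theorem hasDerivAt_katWeight (hρ : ρ ≠ 0) (hs : 0 < s) :
    HasDerivAt (katWeight ρ a) (s ^ (ρ - 1)) s := by
  have := ((hasDerivAt_rpow_const (p := ρ) (Or.inl hs.ne')).sub_const (a ^ ρ)).div_const ρ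
  rwa [mul_div_cancel_left₀ _ hρ] at this

theorem katKernel_nonneg (hρ : 0 < ρ) (α : ℝ) (hs : 0 ≤ s) (hst : s ≤ t) :
    0 ≤ katKernel ρ α t s := by
  have hK : 0 ≤ (t ^ ρ - s ^ ρ) / ρ :=
    div_nonneg (sub_nonneg.2 (rpow_le_rpow hs hst hρ.le)) hρ.le
  unfold katKernel; positivity

theorem katKernel_mul_katWeight_rpow_eq (hρ : 0 < ρ) (ha : 0 ≤ a) (hat : a < t) (α γ : ℝ)
    (hs : s ∈ Icc a t) :
    katKernel ρ α t s * katWeight ρ a s ^ (-γ) =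
      katWeight ρ a t ^ (α - γ) *
        ((1 - katWeight ρ a s / katWeight ρ a t) ^ (α - 1) *
          (katWeight ρ a s / katWeight ρ a t) ^ (-γ) * (s ^ (ρ - 1) / katWeight ρ a t)) := by
  have hT := katWeight_pos hρ ha hat
  have hws := katWeight_nonneg hρ ha hs.1
  have hwst : 0 ≤ katWeight ρ a t - katWeight ρ a s :=
    sub_nonneg.2 (katWeight_le_katWeight hρ (ha.trans hs.1) hs.2)
  rw [katKernel, ← katWeight_sub_katWeight, one_sub_div hT.ne', div_rpow hwst hT.le,
    div_rpow hws hT.le, show α - γ = 1 + (α - 1) + -γ by ring, rpow_add hT, rpow_add hT, rpow_one]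
  field_simp

theorem hasDerivAt_katWeight_div (hρ : 0 < ρ) (ha : 0 < a) (hat : a < t) (hs : s ∈ uIcc a t) :
    HasDerivAt (fun s => katWeight ρ a s / katWeight ρ a t) (s ^ (ρ - 1) / katWeight ρ a t) s :=
  (hasDerivAt_katWeight hρ.ne' (ha.trans_le (by simpa [hat.le] using hs.1))).div_const _

theorem integral_katKernel_mul_katWeight_rpow (hρ : 0 < ρ) (ha : 0 < a) (hat : a < t) (α γ : ℝ) :
    ∫ s in a..t, katKernel ρ α t s * katWeight ρ a s ^ (-γ) =
      katWeight ρ a t ^ (α - γ) * ∫ v in (0 : ℝ)..1, (1 - v) ^ (α - 1) * v ^ (-γ) := by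
  have hT := katWeight_pos hρ ha.le hat
  have hf := fun s hs => hasDerivAt_katWeight_div hρ ha hat (s := s) hs
  rw [intervalIntegral.integral_congr fun s hs =>
      katKernel_mul_katWeight_rpow_eq hρ ha.le hat α γ (by rwa [uIcc_of_le hat.le] at hs),
    intervalIntegral.integral_const_mul]
  congr 1
  simpa [katWeight_self, hT.ne'] using
    intervalIntegral.integral_comp_mul_deriv_of_deriv_nonneg
      (g := fun v => (1 - v) ^ (α - 1) * v ^ (-γ))
      (fun s hs => (hf s hs).continuousAt.continuousWithinAt)
      (fun s hs => hf s (Ioo_subset_Icc_self hs))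
      (fun s hs => div_nonneg (rpow_nonneg (ha.trans (by simpa [hat.le] using hs.1)).le _) hT.le)

theorem intervalIntegrable_katKernel_mul_katWeight_rpow (hρ : 0 < ρ) (ha : 0 < a) (hat : a < t)
    {α γ : ℝ} (hα : 0 < α) (hγ : γ < 1) :
    IntervalIntegrable (fun s => katKernel ρ α t s * katWeight ρ a s ^ (-γ)) volume a t := by
  have hT := katWeight_pos hρ ha.le hat
  have hf := fun s hs => hasDerivAt_katWeight_div hρ ha hat (s := s) hs
  have hsubst := intervalIntegral.integrable_comp_mul_deriv_iff_of_deriv_nonneg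
    (g := fun v => (1 - v) ^ (α - 1) * v ^ (-γ))
    (fun s hs => (hf s hs).continuousAt.continuousWithinAt)
    (fun s hs => hf s (Ioo_subset_Icc_self hs))
    (fun s hs => div_nonneg (rpow_nonneg (ha.trans (by simpa [hat.le] using hs.1)).le _) hT.le)
  simp only [katWeight_self, zero_div, div_self hT.ne'] at hsubst
  refine ((hsubst.2 (intervalIntegrable_one_sub_rpow_mul_rpow hα hγ)).const_mul
    (katWeight ρ a t ^ (α - γ))).congr fun s hs => ?_
  rw [uIoc_of_le hat.le] at hs
  exact (katKernel_mul_katWeight_rpow_eq hρ ha.le hat α γ (Ioc_subset_Icc_self hs)).symm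

theorem abs_katI_le (hρ : 0 < ρ) (ha : 0 < a) (hat : a < t) {α γ : ℝ} (hα : 0 < α)
    (hγ : γ < 1) {g : ℝ → ℝ} {M : ℝ} (hg : ∀ s ∈ Ioc a t, |g s| ≤ M * katWeight ρ a s ^ (-γ)) :
    |katI ρ α a g t| ≤ M / Gamma α * (∫ v in (0 : ℝ)..1, (1 - v) ^ (α - 1) * v ^ (-γ)) *
      katWeight ρ a t ^ (α - γ) := by
  have hbound : |∫ s in a..t, katKernel ρ α t s * g s| ≤
      ∫ s in a..t, M * (katKernel ρ α t s * katWeight ρ a s ^ (-γ)) := by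
    refine intervalIntegral.norm_integral_le_of_norm_le (f := fun s => katKernel ρ α t s * g s)
      hat.le (ae_of_all _ fun s hs => ?_)
      ((intervalIntegrable_katKernel_mul_katWeight_rpow hρ ha hat hα hγ).const_mul M)
    have hK := katKernel_nonneg hρ α (ha.le.trans hs.1.le) hs.2
    rw [Real.norm_eq_abs, abs_mul, abs_of_nonneg hK, mul_left_comm M]
    exact mul_le_mul_of_nonneg_left (hg s hs) hK
  rw [intervalIntegral.integral_const_mul, integral_katKernel_mul_katWeight_rpow hρ ha hat]
    at hbound
  rw [katI, abs_mul, abs_of_pos (one_div_pos.2 (Gamma_pos_of_pos hα))]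
  calc _ ≤ 1 / Gamma α * (M * (katWeight ρ a t ^ (α - γ) *
          ∫ v in (0 : ℝ)..1, (1 - v) ^ (α - 1) * v ^ (-γ))) := by gcongr; exact hbound
    _ = _ := by ring

end Katugampola

theorem bddAbove_image_mul_abs {S K : Set ℝ} (hK : IsCompact K) (hSK : S ⊆ K) {G w g : ℝ → ℝ}
    (hG : ContinuousOn G K) (hGg : ∀ x ∈ S, G x = w x * g x) (hw : ∀ x ∈ S, 0 ≤ w x) :
    BddAbove ((fun x => w x * |g x|) '' S) := by
  obtain ⟨C, hC⟩ := hK.exists_bound_of_continuousOn hG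
  refine ⟨C, ?_⟩
  rintro _ ⟨x, hx, rfl⟩
  change w x * |g x| ≤ C
  rw [← abs_of_nonneg (hw x hx), ← abs_mul, ← hGg x hx]
  exact hC x (hSK hx)

theorem katI_bounded_weighted_general
    (ρ α γ a b : ℝ) (hρ : 0 < ρ) (ha : 0 < a) (hab : a < b)
    (hγ1 : γ < 1) (hα : 0 < α) :
    ∃ C : ℝ, 0 ≤ C ∧
      ∀ g : ℝ → ℝ,
        (∃ G : ℝ → ℝ, ContinuousOn G (Set.Icc a b) ∧
          ∀ t ∈ Set.Ioc a b, G t = ((t ^ ρ - a ^ ρ) / ρ) ^ γ * g t) →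
        ∀ t ∈ Set.Ioc a b,
          ((t ^ ρ - a ^ ρ) / ρ) ^ γ * |katI ρ α a g t|
            ≤ C * sSup ((fun s => ((s ^ ρ - a ^ ρ) / ρ) ^ γ * |g s|) '' Set.Ioc a b) := by
  set B := ∫ v in (0 : ℝ)..1, (1 - v) ^ (α - 1) * v ^ (-γ)
  have hB : 0 ≤ B := intervalIntegral.integral_nonneg zero_le_one fun v hv =>
    mul_nonneg (rpow_nonneg (sub_nonneg.2 hv.2) _) (rpow_nonneg hv.1 _)
  have hΓ := Gamma_pos_of_pos hα
  have hwb := katWeight_nonneg hρ ha.le hab.le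
  refine ⟨B / Gamma α * katWeight ρ a b ^ α, by positivity, ?_⟩
  rintro g ⟨G, hG, hGg⟩ t ht
  set M := sSup ((fun s => katWeight ρ a s ^ γ * |g s|) '' Ioc a b)
  have hweighted : ∀ s ∈ Ioc a b, katWeight ρ a s ^ γ * |g s| ≤ M := fun s hs =>
    le_csSup (bddAbove_image_mul_abs isCompact_Icc Ioc_subset_Icc_self hG hGg
      fun s hs => rpow_nonneg (katWeight_nonneg hρ ha.le hs.1.le) γ) ⟨s, hs, rfl⟩
  have hwt := katWeight_pos hρ ha.le ht.1
  have hM : 0 ≤ M :=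
    (mul_nonneg (rpow_nonneg hwt.le γ) (abs_nonneg (g t))).trans (hweighted t ht)
  have hg : ∀ s ∈ Ioc a t, |g s| ≤ M * katWeight ρ a s ^ (-γ) := fun s hs => by
    have hws := katWeight_pos hρ ha.le hs.1
    rw [rpow_neg hws.le, ← div_eq_mul_inv, le_div_iff₀ (rpow_pos_of_pos hws γ), mul_comm]
    exact hweighted s ⟨hs.1, hs.2.trans ht.2⟩
  calc katWeight ρ a t ^ γ * |katI ρ α a g t|
      ≤ katWeight ρ a t ^ γ * (M / Gamma α * B * katWeight ρ a t ^ (α - γ)) := by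
        gcongr; exact abs_katI_le hρ ha ht.1 hα hγ1 hg
    _ = B / Gamma α * katWeight ρ a t ^ α * M := by
        rw [← add_sub_cancel γ α, rpow_add hwt, add_sub_cancel_left]; ring
    _ ≤ B / Gamma α * katWeight ρ a b ^ α * M := by
        gcongr; exact katWeight_le_katWeight hρ (ha.trans ht.1).le ht.2

/-- The Katugampola fractional integral `^ρI_{a+}^α` is a bounded operator on the
weighted space `C_{γ,ρ}[a,b]`. -/
theorem katI_bounded_weighted
    (ρ α γ a b : ℝ) (hρ : 0 < ρ) (ha : 0 < a) (hab : a < b)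
    (hγ0 : 0 ≤ γ) (hγ1 : γ < 1) (hα : 0 < α) :
    ∃ C : ℝ, 0 ≤ C ∧
      ∀ g : ℝ → ℝ,
        (∃ G : ℝ → ℝ, ContinuousOn G (Set.Icc a b) ∧
          ∀ t ∈ Set.Ioc a b, G t = ((t ^ ρ - a ^ ρ) / ρ) ^ γ * g t) →
        ∀ t ∈ Set.Ioc a b,
          ((t ^ ρ - a ^ ρ) / ρ) ^ γ * |katI ρ α a g t|
            ≤ C * sSup ((fun s => ((s ^ ρ - a ^ ρ) / ρ) ^ γ * |g s|) '' Set.Ioc a b) :=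
  katI_bounded_weighted_general ρ α γ a b hρ ha hab hγ1 hα
end
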